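/- arXiv:2302.06689 — 3 statements merged into one kernel-verified Lean document; each statement's English description precedes it below -/
import Mathlib

section
/- Let V : ℝ² → ℝ be nonnegative, measurable and bounded with ∫_{ℝ²} V(x) dx = 1, let s > 0, n ≥ 1 an integer, and x₀ ∈ ℝ². Then, with the convention s₀ = 0, ∫_{0 < s₁ < ⋯ < s_n < s} ∫_{(ℝ²)^n} ∏_{i=1}^{n} V(√2·x_i) ρ_{s_i − s_{i−1}}(x_{i−1} − x_i) dx₁⋯dx_n ds₁⋯ds_n ≤ ( ∫_0^s min(1/(4πr), ‖V‖_∞) dr )^n. -/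
/-!
Integrating out the space variables one at a time, each factor contributes
`∫ V(√2 x) ρ_t(y - x) dx ≤ min ((2πt)⁻¹ ∫ V(√2 x) dx, ‖V‖_∞) = min (1/(4πt), ‖V‖_∞)`
uniformly in `y`, because `ρ_t` is a probability density bounded by `(2πt)⁻¹`. What is left is
the simplex integral of `∏ g(s_i - s_{i-1})`, and relaxing the ordering constraints to
`0 < s_i - s_{i-1} ≤ s` bounds it by `(∫₀ˢ g)^n`. Both steps are instances of one estimate: a
chain of kernels, each of mass at most `b_i` from every starting point, has total mass at most
`∏ b_i`.
-/

open MeasureTheory Real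

/-- The two-dimensional heat kernel `ρ_t(x) = (2πt)⁻¹ exp(−|x|²/(2t))`. -/
noncomputable def heatK (t : ℝ) (x : EuclideanSpace ℝ (Fin 2)) : ℝ :=
  (2 * π * t)⁻¹ * Real.exp (-‖x‖ ^ 2 / (2 * t))

open scoped ENNReal

local notation "ℝ²" => EuclideanSpace ℝ (Fin 2)

theorem ofReal_integral_le_lintegral_ofReal {α : Type*} [MeasurableSpace α] {μ : Measure α}
    {f : α → ℝ} (hf : ∀ x, 0 ≤ f x) :
    ENNReal.ofReal (∫ x, f x ∂μ) ≤ ∫⁻ x, ENNReal.ofReal (f x) ∂μ := by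
  calc ENNReal.ofReal (∫ x, f x ∂μ) = ‖∫ x, f x ∂μ‖ₑ :=
        (Real.enorm_of_nonneg (integral_nonneg hf)).symm
    _ ≤ ∫⁻ x, ‖f x‖ₑ ∂μ := enorm_integral_le_lintegral_enorm f
    _ = ∫⁻ x, ENNReal.ofReal (f x) ∂μ := by simp_rw [Real.enorm_of_nonneg (hf _)]

section Chain

variable {E : Type*} [MeasurableSpace E] (μ : Measure E) [SigmaFinite μ]

theorem measurable_fin_cons_apply {n : ℕ} (x₀ : E) (k : Fin (n + 1)) :
    Measurable fun X : Fin n → E => (Fin.cons x₀ X : Fin (n + 1) → E) k := by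
  cases k using Fin.cases with
  | zero => exact measurable_const
  | succ j => exact measurable_pi_apply j

theorem measurable_prod_chain {n : ℕ} {K : Fin n → E → E → ℝ≥0∞}
    (hK : ∀ i, Measurable (Function.uncurry (K i))) (x₀ : E) :
    Measurable fun X : Fin n → E =>
      ∏ i, K i ((Fin.cons x₀ X : Fin (n + 1) → E) i.castSucc) (X i) :=
  Finset.measurable_prod _ fun i _ =>
    (hK i).comp ((measurable_fin_cons_apply x₀ i.castSucc).prodMk (measurable_pi_apply i))

theorem lintegral_prod_chain_le {n : ℕ} (K : Fin n → E → E → ℝ≥0∞) (b : Fin n → ℝ≥0∞)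
    (hK : ∀ i, Measurable (Function.uncurry (K i))) (hb : ∀ i y, ∫⁻ x, K i y x ∂μ ≤ b i)
    (x₀ : E) :
    ∫⁻ X, ∏ i, K i ((Fin.cons x₀ X : Fin (n + 1) → E) i.castSucc) (X i) ∂Measure.pi (fun _ => μ)
      ≤ ∏ i, b i := by
  induction n generalizing x₀ with
  | zero => simp
  | succ n ih =>
    have he : ∀ p, (MeasurableEquiv.piFinSuccAbove (fun _ : Fin (n + 1) => E) 0).symm p =
        Fin.cons p.1 p.2 := fun p => Fin.insertNth_zero' p.1 p.2
    set G : E → (Fin n → E) → ℝ≥0∞ := fun x X =>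
      ∏ j : Fin n, K j.succ ((Fin.cons x X : Fin (n + 1) → E) j.castSucc) (X j)
    have hsplit : ∀ x X, ∏ i, K i ((Fin.cons x₀ (Fin.cons x X : Fin (n + 1) → E) :
        Fin (n + 2) → E) i.castSucc) ((Fin.cons x X : Fin (n + 1) → E) i) = K 0 x₀ x * G x X := by
      intro x X
      simp [G, Fin.prod_univ_succ]
    calc _ = ∫⁻ p, K 0 x₀ p.1 * G p.1 p.2 ∂μ.prod (Measure.pi fun _ => μ) := by
          rw [← ((measurePreserving_piFinSuccAbove (fun _ => μ) 0).symm).lintegral_comp_emb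
            (MeasurableEquiv.measurableEmbedding _)]
          simp only [he, hsplit]
      _ ≤ ∫⁻ x, ∫⁻ X, K 0 x₀ x * G x X ∂Measure.pi (fun _ => μ) ∂μ := lintegral_prod_le _
      _ = ∫⁻ x, K 0 x₀ x * ∫⁻ X, G x X ∂Measure.pi (fun _ => μ) ∂μ := by
          congr 1 with x
          exact lintegral_const_mul _ (measurable_prod_chain (fun j => hK j.succ) x)
      _ ≤ ∫⁻ x, K 0 x₀ x * ∏ j : Fin n, b j.succ ∂μ := by
          gcongr with x
          exact ih _ _ (fun j => hK j.succ) (fun j => hb j.succ) x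
      _ = (∫⁻ x, K 0 x₀ x ∂μ) * ∏ j : Fin n, b j.succ :=
          lintegral_mul_const _ ((hK 0).comp measurable_prodMk_left)
      _ ≤ ∏ i, b i := by
          rw [Fin.prod_univ_succ]
          gcongr
          exact hb 0 x₀

end Chain

section HeatKernel

variable {t : ℝ}

theorem heatK_nonneg (ht : 0 ≤ t) (x : ℝ²) : 0 ≤ heatK t x := by
  unfold heatK
  positivity

theorem heatK_le (ht : 0 ≤ t) (x : ℝ²) : heatK t x ≤ (2 * π * t)⁻¹ := by
  unfold heatK
  refine mul_le_of_le_one_right (by positivity) (Real.exp_le_one_iff.2 ?_)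
  exact div_nonpos_of_nonpos_of_nonneg (by simp) (by positivity)

@[fun_prop]
theorem measurable_heatK (t : ℝ) : Measurable (heatK t) := by
  unfold heatK
  fun_prop

theorem heatK_eq_exp_mul_sq_norm (t : ℝ) (x : ℝ²) :
    heatK t x = (2 * π * t)⁻¹ * Real.exp (-(2 * t)⁻¹ * ‖x‖ ^ 2) := by
  rw [heatK, neg_div, div_eq_inv_mul, neg_mul]

theorem integral_heatK (ht : 0 < t) : ∫ x, heatK t x = 1 := by
  simp_rw [heatK_eq_exp_mul_sq_norm]
  rw [integral_const_mul, GaussianFourier.integral_rexp_neg_mul_sq_norm (by positivity),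
    finrank_euclideanSpace_fin]
  field_simp
  norm_num

theorem integrable_heatK (ht : 0 < t) : Integrable (heatK t) :=
  Integrable.of_integral_ne_zero (by simp [integral_heatK ht])

theorem lintegral_ofReal_heatK_sub (ht : 0 < t) (y : ℝ²) :
    ∫⁻ x, ENNReal.ofReal (heatK t (y - x)) = 1 := by
  rw [lintegral_sub_left_eq_self (fun x => ENNReal.ofReal (heatK t x)),
    ← ofReal_integral_eq_lintegral_ofReal (integrable_heatK ht)
      (ae_of_all _ (heatK_nonneg ht.le)), integral_heatK ht, ENNReal.ofReal_one]

end HeatKernel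

section Space

variable {V : ℝ² → ℝ} {t : ℝ}

theorem lintegral_mul_heatK_le_of_le {f : ℝ² → ℝ≥0∞} {M : ℝ≥0∞} (hf : ∀ x, f x ≤ M)
    (ht : 0 < t) (y : ℝ²) : ∫⁻ x, f x * ENNReal.ofReal (heatK t (y - x)) ≤ M :=
  calc ∫⁻ x, f x * ENNReal.ofReal (heatK t (y - x))
      ≤ ∫⁻ x, M * ENNReal.ofReal (heatK t (y - x)) := lintegral_mono fun x => by gcongr; exact hf x
    _ = M := by
      rw [lintegral_const_mul _ (by fun_prop), lintegral_ofReal_heatK_sub ht, mul_one]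

theorem lintegral_mul_heatK_le_lintegral (f : ℝ² → ℝ≥0∞) (ht : 0 < t) (y : ℝ²) :
    ∫⁻ x, f x * ENNReal.ofReal (heatK t (y - x)) ≤ (∫⁻ x, f x) * ENNReal.ofReal (2 * π * t)⁻¹ :=
  calc ∫⁻ x, f x * ENNReal.ofReal (heatK t (y - x))
      ≤ ∫⁻ x, f x * ENNReal.ofReal (2 * π * t)⁻¹ :=
        lintegral_mono fun x => by gcongr; exact heatK_le ht.le _
    _ = (∫⁻ x, f x) * ENNReal.ofReal (2 * π * t)⁻¹ :=
        lintegral_mul_const' _ _ ENNReal.ofReal_ne_top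

theorem lintegral_ofReal_comp_smul (hV0 : ∀ x, 0 ≤ V x) (hV : Integrable V) {c : ℝ} (hc : c ≠ 0) :
    ∫⁻ x, ENNReal.ofReal (V (c • x)) = ENNReal.ofReal ((c ^ 2)⁻¹ * ∫ x, V x) := by
  rw [← ofReal_integral_eq_lintegral_ofReal ((integrable_comp_smul_iff volume V hc).2 hV)
    (ae_of_all _ fun x => hV0 _), Measure.integral_comp_smul, finrank_euclideanSpace_fin,
    abs_of_nonneg (inv_nonneg.2 (sq_nonneg c)), smul_eq_mul]

theorem lintegral_mul_heatK_le_min {M : ℝ} (hV0 : ∀ x, 0 ≤ V x) (hM : ∀ x, V x ≤ M)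
    (hVint : ∫ x, V x = 1) (ht : 0 < t) (y : ℝ²) :
    ∫⁻ x, ENNReal.ofReal (V (√2 • x)) * ENNReal.ofReal (heatK t (y - x))
      ≤ ENNReal.ofReal (min (1 / (4 * π * t)) M) := by
  have hscale : ∫⁻ x, ENNReal.ofReal (V (√2 • x)) = ENNReal.ofReal 2⁻¹ := by
    rw [lintegral_ofReal_comp_smul hV0 (.of_integral_ne_zero (by simp [hVint])) (by positivity),
      hVint, Real.sq_sqrt zero_le_two, mul_one]
  rw [ENNReal.ofReal_min, le_min_iff]
  constructor
  · calc _ ≤ ENNReal.ofReal 2⁻¹ * ENNReal.ofReal (2 * π * t)⁻¹ :=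
          hscale ▸ lintegral_mul_heatK_le_lintegral _ ht y
      _ = ENNReal.ofReal (1 / (4 * π * t)) := by
          rw [← ENNReal.ofReal_mul (by norm_num)]
          congr 1
          field_simp
          ring
  · exact lintegral_mul_heatK_le_of_le (fun x => ENNReal.ofReal_le_ofReal (hM _)) ht y

theorem ofReal_integral_prod_heatK_le {M : ℝ} (hV0 : ∀ x, 0 ≤ V x)
    (hVmeas : Measurable V) (hM : ∀ x, V x ≤ M) (hVint : ∫ x, V x = 1) {n : ℕ} (x₀ : ℝ²)
    (t : Fin n → ℝ) (ht : ∀ i, 0 < t i) :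
    ENNReal.ofReal (∫ X : Fin n → ℝ², ∏ i, V (√2 • X i) *
        heatK (t i) ((Fin.cons x₀ X : Fin (n + 1) → ℝ²) i.castSucc
          - (Fin.cons x₀ X : Fin (n + 1) → ℝ²) i.succ))
      ≤ ∏ i, ENNReal.ofReal (min (1 / (4 * π * t i)) M) := by
  have hnonneg : ∀ i (y x : ℝ²), 0 ≤ V (√2 • x) * heatK (t i) (y - x) :=
    fun i y x => mul_nonneg (hV0 _) (heatK_nonneg (ht i).le _)
  refine (ofReal_integral_le_lintegral_ofReal fun X => Finset.prod_nonneg fun i _ =>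
    hnonneg i _ _).trans ?_
  simp_rw [ENNReal.ofReal_prod_of_nonneg (fun i _ => hnonneg i _ _), ENNReal.ofReal_mul (hV0 _)]
  exact lintegral_prod_chain_le volume
    (fun i y x => ENNReal.ofReal (V (√2 • x)) * ENNReal.ofReal (heatK (t i) (y - x))) _
    (fun i => by fun_prop) (fun i y => lintegral_mul_heatK_le_min hV0 hM hVint (ht i) y) x₀

end Space

section Time

variable {n : ℕ} {s : ℝ} {g : ℝ → ℝ≥0∞}

theorem simplex_step_bounds {σ : Fin (n + 1) → ℝ}
    (hσ : StrictMono σ ∧ 0 < σ 0 ∧ σ (Fin.last n) < s) (i : Fin (n + 1)) :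
    0 ≤ (Fin.cons 0 σ : Fin (n + 2) → ℝ) i.castSucc ∧
      (Fin.cons 0 σ : Fin (n + 2) → ℝ) i.castSucc < σ i ∧ σ i < s := by
  obtain ⟨hmono, hpos, hlast⟩ := hσ
  refine ⟨?_, ?_, (hmono.monotone (Fin.le_last i)).trans_lt hlast⟩
  · cases i using Fin.cases with
    | zero => simp
    | succ j =>
      rw [← Fin.succ_castSucc, Fin.cons_succ]
      exact hpos.le.trans (hmono.monotone (Fin.zero_le _))
  · cases i using Fin.cases with
    | zero => simpa using hpos
    | succ j =>
      rw [← Fin.succ_castSucc, Fin.cons_succ]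
      exact hmono j.castSucc_lt_succ

theorem simplex_increment_pos {σ : Fin (n + 1) → ℝ}
    (hσ : StrictMono σ ∧ 0 < σ 0 ∧ σ (Fin.last n) < s) (i : Fin (n + 1)) :
    0 < (Fin.cons 0 σ : Fin (n + 2) → ℝ) i.succ - (Fin.cons 0 σ : Fin (n + 2) → ℝ) i.castSucc := by
  rw [Fin.cons_succ]
  exact sub_pos.2 (simplex_step_bounds hσ i).2.1

/-- The constraint `0 ≤ u` bounds the mass of `timeKernel g s u` by `∫_{(0,s]} g` for every `u`. -/
noncomputable def timeKernel (g : ℝ → ℝ≥0∞) (s u v : ℝ) : ℝ≥0∞ :=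
  if 0 ≤ u ∧ u < v ∧ v < s then g (v - u) else 0

theorem measurable_timeKernel (hg : Measurable g) :
    Measurable (Function.uncurry (timeKernel g s)) :=
  Measurable.ite ((measurableSet_le measurable_const measurable_fst).inter
      ((measurableSet_lt measurable_fst measurable_snd).inter
        (measurableSet_lt measurable_snd measurable_const)))
    (hg.comp (measurable_snd.sub measurable_fst)) measurable_const

theorem lintegral_timeKernel_le (u : ℝ) :
    ∫⁻ v, timeKernel g s u v ≤ ∫⁻ r in Set.Ioc 0 s, g r :=
  calc ∫⁻ v, timeKernel g s u v ≤ ∫⁻ v, (Set.Ioc 0 s).indicator g (v - u) := by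
        refine lintegral_mono fun v => ?_
        unfold timeKernel
        by_cases h : 0 ≤ u ∧ u < v ∧ v < s
        · rw [if_pos h, Set.indicator_of_mem (show v - u ∈ Set.Ioc 0 s by grind)]
        · simp [h]
    _ = ∫⁻ r in Set.Ioc 0 s, g r := by
        rw [lintegral_sub_right_eq_self (Set.indicator _ g), lintegral_indicator measurableSet_Ioc]

theorem lintegral_simplex_le (hg : Measurable g) (n : ℕ) :
    ∫⁻ σ : Fin (n + 1) → ℝ,
      {σ : Fin (n + 1) → ℝ | StrictMono σ ∧ 0 < σ 0 ∧ σ (Fin.last n) < s}.indicator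
        (fun σ => ∏ i : Fin (n + 1), g ((Fin.cons 0 σ : Fin (n + 2) → ℝ) i.succ
          - (Fin.cons 0 σ : Fin (n + 2) → ℝ) i.castSucc)) σ
      ≤ (∫⁻ r in Set.Ioc 0 s, g r) ^ (n + 1) := by
  calc _ ≤ ∫⁻ σ : Fin (n + 1) → ℝ,
          ∏ i, timeKernel g s ((Fin.cons 0 σ : Fin (n + 2) → ℝ) i.castSucc) (σ i) := by
        refine lintegral_mono fun σ => ?_
        rw [Set.indicator_apply]
        split_ifs with hσ
        · refine (Finset.prod_congr rfl fun i _ => ?_).le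
          rw [timeKernel, if_pos (simplex_step_bounds hσ i), Fin.cons_succ]
        · exact zero_le
    _ ≤ ∏ _i : Fin (n + 1), ∫⁻ r in Set.Ioc 0 s, g r :=
        lintegral_prod_chain_le volume _ _ (fun _ => measurable_timeKernel hg)
          (fun _ => lintegral_timeKernel_le) 0
    _ = (∫⁻ r in Set.Ioc 0 s, g r) ^ (n + 1) := by simp

end Time

theorem stmt1_general (V : EuclideanSpace ℝ (Fin 2) → ℝ)
    (hV0 : ∀ x, 0 ≤ V x) (hVmeas : Measurable V)
    (hVbdd : ∃ M : ℝ, ∀ x, V x ≤ M)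
    (hVint : ∫ x, V x = 1)
    (s : ℝ) (n : ℕ) (x₀ : EuclideanSpace ℝ (Fin 2)) :
    (∫ σ : Fin (n+1) → ℝ,
      Set.indicator {σ : Fin (n+1) → ℝ | StrictMono σ ∧ 0 < σ 0 ∧ σ (Fin.last n) < s}
        (fun σ => ∫ X : Fin (n+1) → EuclideanSpace ℝ (Fin 2),
          ∏ i : Fin (n+1),
            V (Real.sqrt 2 • X i) *
              heatK ((Fin.cons 0 σ : Fin (n+2) → ℝ) i.succ
                      - (Fin.cons 0 σ : Fin (n+2) → ℝ) i.castSucc)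
                ((Fin.cons x₀ X : Fin (n+2) → EuclideanSpace ℝ (Fin 2)) i.castSucc
                  - (Fin.cons x₀ X : Fin (n+2) → EuclideanSpace ℝ (Fin 2)) i.succ)) σ)
    ≤ (∫ r in Set.Ioc (0:ℝ) s, min (1 / (4 * π * r)) (⨆ z, V z)) ^ (n+1) := by
  obtain ⟨M₀, hM₀⟩ := hVbdd
  have hM : ∀ x, V x ≤ ⨆ z, V z := le_ciSup ⟨M₀, Set.forall_mem_range.2 hM₀⟩
  set M := ⨆ z, V z
  have hM0 : 0 ≤ M := (hV0 x₀).trans (hM x₀)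
  set B := ∫⁻ r in Set.Ioc 0 s, ENNReal.ofReal (min (1 / (4 * π * r)) M)
  have hB : B ≠ ⊤ := by
    refine ne_top_of_le_ne_top ?_
      (lintegral_mono fun r => ENNReal.ofReal_le_ofReal (min_le_right _ M))
    rw [setLIntegral_const, Real.volume_Ioc]
    exact ENNReal.mul_ne_top ENNReal.ofReal_ne_top ENNReal.ofReal_ne_top
  have hBreal : B.toReal = ∫ r in Set.Ioc 0 s, min (1 / (4 * π * r)) M := by
    refine (integral_eq_lintegral_of_nonneg_ae ?_
      ((Measurable.min (by fun_prop) measurable_const).aestronglyMeasurable)).symm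
    filter_upwards [ae_restrict_mem measurableSet_Ioc] with r hr
    exact le_min (by have := hr.1; positivity) hM0
  rw [← hBreal, ← ENNReal.toReal_pow, ← ENNReal.ofReal_le_iff_le_toReal (ENNReal.pow_ne_top hB)]
  refine (ofReal_integral_le_lintegral_ofReal fun σ => ?_).trans
    ((lintegral_mono fun σ => ?_).trans (lintegral_simplex_le (by fun_prop) n))
  · refine Set.indicator_nonneg (fun σ hσ => integral_nonneg fun X => ?_) σ
    exact Finset.prod_nonneg fun i _ =>
      mul_nonneg (hV0 _) (heatK_nonneg (simplex_increment_pos hσ i).le _)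
  · simp only [Set.indicator_apply]
    split_ifs with hσ
    · exact ofReal_integral_prod_heatK_le hV0 hVmeas hM hVint x₀ _ (simplex_increment_pos hσ)
    · simp

/-- The `n`-fold simplex integral (here with `n+1` time/space variables, so that the
number of variables is an arbitrary integer `≥ 1`) of the chaos expansion is bounded by
the `n`-th power of `∫₀ˢ min(1/(4πr), ‖V‖_∞) dr`.  The convention `s₀ = 0`, `x₀` given,
is implemented by `Fin.cons`. -/
theorem stmt1 (V : EuclideanSpace ℝ (Fin 2) → ℝ)
    (hV0 : ∀ x, 0 ≤ V x) (hVmeas : Measurable V)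
    (hVbdd : ∃ M : ℝ, ∀ x, V x ≤ M)
    (hVint : ∫ x, V x = 1)
    (s : ℝ) (hs : 0 < s) (n : ℕ) (x₀ : EuclideanSpace ℝ (Fin 2)) :
    (∫ σ : Fin (n+1) → ℝ,
      Set.indicator {σ : Fin (n+1) → ℝ | StrictMono σ ∧ 0 < σ 0 ∧ σ (Fin.last n) < s}
        (fun σ => ∫ X : Fin (n+1) → EuclideanSpace ℝ (Fin 2),
          ∏ i : Fin (n+1),
            V (Real.sqrt 2 • X i) *
              heatK ((Fin.cons 0 σ : Fin (n+2) → ℝ) i.succ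
                      - (Fin.cons 0 σ : Fin (n+2) → ℝ) i.castSucc)
                ((Fin.cons x₀ X : Fin (n+2) → EuclideanSpace ℝ (Fin 2)) i.castSucc
                  - (Fin.cons x₀ X : Fin (n+2) → EuclideanSpace ℝ (Fin 2)) i.succ)) σ)
    ≤ (∫ r in Set.Ioc (0:ℝ) s, min (1 / (4 * π * r)) (⨆ z, V z)) ^ (n+1) :=
  stmt1_general V hV0 hVmeas hVbdd hVint s n x₀
end

section
/- Let t > 0, K₀ > 0, a ∈ (0, 1], and ε ∈ (0, 1) with 4πK₀t ≥ ε². Set u = ε^{2a} t. Then for every s′ with 0 < s′ ≤ t − u, ∫_0^{s′} min( 1/(2(s′ − r)) + 1/(2r + 2u), 2πK₀/ε² ) dr ≤ (1/2) log(4πK₀ t) + 1/2 + (1 + a) log(1/ε). -/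
/-!
Since `min (A + B) M ≤ min A M + min B M` for `A, B, M ≥ 0`, the integral splits in two. With
`δ = ε² / (4πK₀)` the cap is `2πK₀/ε² = 1 / (2δ)`. After `r ↦ s' - r` the first part is
`∫₀^{s'} min (1/(2x)) (1/(2δ)) dx`: the cap contributes at most `1/2` on `[0, δ]`, and `1/(2x)`
contributes `½ log (s'/δ)` beyond. The second part is at most
`∫₀^{s'} dr / (2(r + u)) = ½ log ((s' + u)/u)`. The hypothesis `ε² ≤ 4πK₀t` says `δ ≤ t`, so
`max s' δ` and `s' + u` are at most `t`, and the logarithms add up to the claimed bound.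
-/

open MeasureTheory Real Set
open scoped Interval

lemma min_add_le_min_add_min {A B M : ℝ} (hA : 0 ≤ A) (hB : 0 ≤ B) (hM : 0 ≤ M) :
    min (A + B) M ≤ min A M + min B M := by
  simp only [min_def]
  split_ifs <;> linarith

lemma intervalIntegrable_min_const {f : ℝ → ℝ} {a b M : ℝ} (hf : Measurable f) (hM : 0 ≤ M)
    (hf0 : ∀ x ∈ Ι a b, 0 ≤ f x) : IntervalIntegrable (fun x => min (f x) M) volume a b := by
  refine (intervalIntegrable_const (c := M)).mono_fun'
    (hf.min measurable_const).aestronglyMeasurable ?_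
  filter_upwards [ae_restrict_mem measurableSet_uIoc] with x hx
  rw [Real.norm_eq_abs, abs_of_nonneg (le_min (hf0 x hx) hM)]
  exact min_le_right _ _

lemma integral_div_add_const {c u s : ℝ} (hu : 0 < u) (hs : 0 ≤ s) :
    ∫ r in (0:ℝ)..s, c / (r + u) = c * log ((s + u) / u) := by
  simp only [div_eq_mul_inv c, intervalIntegral.integral_const_mul,
    intervalIntegral.integral_comp_add_right fun x => x⁻¹, zero_add]
  rw [integral_inv_of_pos hu (by linarith)]

lemma integral_min_div_le {c δ s : ℝ} (hc : 0 ≤ c) (hδ : 0 < δ) (hs : 0 ≤ s) :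
    ∫ x in (0:ℝ)..s, min (c / x) (c / δ) ≤ c * (1 + log (max s δ / δ)) := by
  set m := max s δ
  have hδm : δ ≤ m := le_max_right s δ
  have hint {a b : ℝ} (ha : 0 ≤ a) (hab : a ≤ b) :
      IntervalIntegrable (fun x => min (c / x) (c / δ)) volume a b :=
    intervalIntegrable_min_const (by fun_prop) (by positivity) fun x hx =>
      div_nonneg hc (ha.trans (uIoc_of_le hab ▸ hx).1.le)
  have hnear : ∫ x in (0:ℝ)..δ, min (c / x) (c / δ) ≤ c := by
    calc _ ≤ ∫ _ in (0:ℝ)..δ, c / δ :=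
          intervalIntegral.integral_mono_on hδ.le (hint le_rfl hδ.le) intervalIntegrable_const
            fun x _ => min_le_right _ _
      _ = c := by
          rw [intervalIntegral.integral_const, sub_zero, smul_eq_mul, mul_div_cancel₀ c hδ.ne']
  have hfar : ∫ x in δ..m, min (c / x) (c / δ) ≤ c * log (m / δ) := by
    calc _ ≤ ∫ x in δ..m, c / x :=
          intervalIntegral.integral_mono_on hδm (hint hδ.le hδm)
            (continuousOn_const.div continuousOn_id fun x hx =>
              (hδ.trans_le (uIcc_of_le hδm ▸ hx).1).ne').intervalIntegrable
            fun x _ => min_le_left _ _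
      _ = c * log (m / δ) := by
          simp only [div_eq_mul_inv c, intervalIntegral.integral_const_mul]
          rw [integral_inv_of_pos hδ (hδ.trans_le hδm)]
  calc _ ≤ ∫ x in (0:ℝ)..m, min (c / x) (c / δ) :=
        intervalIntegral.integral_mono_interval le_rfl hs (le_max_left s δ)
          (by
            filter_upwards [ae_restrict_mem measurableSet_Ioc] with x hx
            exact le_min (div_nonneg hc hx.1.le) (by positivity))
          (hint le_rfl (hs.trans (le_max_left s δ)))
    _ = (∫ x in (0:ℝ)..δ, min (c / x) (c / δ)) + ∫ x in δ..m, min (c / x) (c / δ) :=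
        (intervalIntegral.integral_add_adjacent_intervals (hint le_rfl hδ.le)
          (hint hδ.le hδm)).symm
    _ ≤ c * (1 + log (m / δ)) := by linarith

lemma integral_min_div_sub_add_div_add_le {c u δ s : ℝ} (hc : 0 ≤ c) (hu : 0 < u) (hδ : 0 < δ)
    (hs : 0 ≤ s) :
    ∫ r in (0:ℝ)..s, min (c / (s - r) + c / (r + u)) (c / δ)
      ≤ c * (1 + log (max s δ / δ) + log ((s + u) / u)) := by
  have hM : 0 ≤ c / δ := by positivity
  have hA (r : ℝ) (hr : r ∈ Icc 0 s) : 0 ≤ c / (s - r) := div_nonneg hc (by linarith [hr.2])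
  have hB (r : ℝ) (hr : r ∈ Icc 0 s) : 0 ≤ c / (r + u) := div_nonneg hc (by linarith [hr.1])
  have hIcc (r : ℝ) (hr : r ∈ Ι 0 s) : r ∈ Icc 0 s := Ioc_subset_Icc_self (uIoc_of_le hs ▸ hr)
  have hint₁ : IntervalIntegrable (fun r => min (c / (s - r)) (c / δ)) volume 0 s :=
    intervalIntegrable_min_const (by fun_prop) hM fun r hr => hA r (hIcc r hr)
  have hint₂ : IntervalIntegrable (fun r => min (c / (r + u)) (c / δ)) volume 0 s :=
    intervalIntegrable_min_const (by fun_prop) hM fun r hr => hB r (hIcc r hr)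
  have hint : IntervalIntegrable (fun r => min (c / (s - r) + c / (r + u)) (c / δ)) volume 0 s :=
    intervalIntegrable_min_const (by fun_prop) hM fun r hr =>
      add_nonneg (hA r (hIcc r hr)) (hB r (hIcc r hr))
  have hfirst : ∫ r in (0:ℝ)..s, min (c / (s - r)) (c / δ) ≤ c * (1 + log (max s δ / δ)) := by
    rw [intervalIntegral.integral_comp_sub_left (fun x => min (c / x) (c / δ)), sub_self,
      sub_zero]
    exact integral_min_div_le hc hδ hs
  have hsecond : ∫ r in (0:ℝ)..s, min (c / (r + u)) (c / δ) ≤ c * log ((s + u) / u) := by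
    rw [← integral_div_add_const hu hs]
    exact intervalIntegral.integral_mono_on hs hint₂
      (continuousOn_const.div (by fun_prop) fun r hr =>
        (by linarith [(uIcc_of_le hs ▸ hr).1] : r + u ≠ 0)).intervalIntegrable
      fun r _ => min_le_left _ _
  calc _ ≤ ∫ r in (0:ℝ)..s, (min (c / (s - r)) (c / δ) + min (c / (r + u)) (c / δ)) :=
        intervalIntegral.integral_mono_on hs hint (hint₁.add hint₂) fun r hr =>
          min_add_le_min_add_min (hA r hr) (hB r hr) hM
    _ = (∫ r in (0:ℝ)..s, min (c / (s - r)) (c / δ))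
          + ∫ r in (0:ℝ)..s, min (c / (r + u)) (c / δ) :=
        intervalIntegral.integral_add hint₁ hint₂
    _ ≤ c * (1 + log (max s δ / δ) + log ((s + u) / u)) := by linarith

theorem stmt11_general (t K₀ a ε : ℝ) (ht : 0 < t) (hK : 0 < K₀)
    (hε0 : 0 < ε)
    (hKt : ε ^ 2 ≤ 4 * π * K₀ * t)
    (s' : ℝ) (hs'0 : 0 < s') (hs' : s' ≤ t - ε ^ (2 * a) * t) :
    ∫ r in (0:ℝ)..s',
        min (1 / (2 * (s' - r)) + 1 / (2 * r + 2 * (ε ^ (2 * a) * t))) (2 * π * K₀ / ε ^ 2)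
      ≤ (1/2) * Real.log (4 * π * K₀ * t) + 1/2 + (1 + a) * Real.log (1/ε) := by
  set u := ε ^ (2 * a) * t
  set δ := ε ^ 2 / (4 * π * K₀) with hδ_def
  have hu : 0 < u := by positivity
  have hδ : 0 < δ := by positivity
  have hcap : 2 * π * K₀ / ε ^ 2 = 1 / 2 / δ := by
    rw [hδ_def]
    field_simp
    norm_num
  have hintegrand (r : ℝ) : min (1 / (2 * (s' - r)) + 1 / (2 * r + 2 * u)) (2 * π * K₀ / ε ^ 2)
      = min (1 / 2 / (s' - r) + 1 / 2 / (r + u)) (1 / 2 / δ) := by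
    rw [← mul_add, ← div_mul_eq_div_div, ← div_mul_eq_div_div, hcap]
  simp only [hintegrand]
  refine (integral_min_div_sub_add_div_add_le (by norm_num) hu hδ hs'0.le).trans ?_
  have hmax : log (max s' δ) ≤ log t := by
    refine log_le_log (hδ.trans_le (le_max_right _ _)) (max_le (by linarith) ?_)
    rwa [div_le_iff₀ (by positivity), mul_comm t]
  have hsu : log (s' + u) ≤ log t := log_le_log (by positivity) (by linarith)
  have hlogδ : log δ = 2 * log ε - log (4 * π * K₀) := by
    rw [log_div (by positivity) (by positivity), log_pow, Nat.cast_ofNat]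
  have hlogu : log u = 2 * a * log ε + log t := by
    rw [log_mul (by positivity) ht.ne', log_rpow hε0]
  rw [log_div (by positivity) hδ.ne', log_div (by positivity) hu.ne', hlogδ, hlogu,
    log_mul (by positivity) ht.ne', one_div ε, log_inv]
  linarith

theorem stmt11 (t K₀ a ε : ℝ) (ht : 0 < t) (hK : 0 < K₀)
    (ha : 0 < a) (ha1 : a ≤ 1) (hε0 : 0 < ε) (hε1 : ε < 1)
    (hKt : ε ^ 2 ≤ 4 * π * K₀ * t)
    (s' : ℝ) (hs'0 : 0 < s') (hs' : s' ≤ t - ε ^ (2 * a) * t) :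
    ∫ r in (0:ℝ)..s',
        min (1 / (2 * (s' - r)) + 1 / (2 * r + 2 * (ε ^ (2 * a) * t))) (2 * π * K₀ / ε ^ 2)
      ≤ (1/2) * Real.log (4 * π * K₀ * t) + 1/2 + (1 + a) * Real.log (1/ε) :=
  stmt11_general t K₀ a ε ht hK hε0 hKt s' hs'0 hs'
end

section
/- Let t > 0, K₀ > 0, a ∈ (0, 1], ε ∈ (0, 1) with 4πK₀t ≥ ε², and set u = ε^{2a} t. Then for every integer n ≥ 1, ∫_{0 < s₁ < ⋯ < s_n < t − u} (2s_n + 2u)^{−1} ∏_{i=1}^{n−1} min( 1/(2(s_{i+1} − s_i)) + 1/(2s_i + 2u), 2πK₀/ε² ) ds₁⋯ds_n ≤ ( (1/2) log(4πK₀ t) + 1/2 + (1 + a) log(1/ε) )^{n−1} · a log(1/ε). -/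
/-!
Integrate out the earliest time first. By Tonelli, each of the `n` kernel factors then contributes
at most `∫₀^c min (1/(2(c-x)) + 1/(2x+2u)) M dx ≤ 1/2 + log (2Mt) / 2 + log (t/u) / 2`, where
`c + u ≤ t`. Since `min (A + B) M ≤ min A M + B`, the singular part `1/(2x)`, capped at `M`, costs
`1/2` on `[0, 1/(2M)]` and `log (2Mt) / 2` beyond. The last factor `(2s+2u)⁻¹` contributes
`log (t/u) / 2 = a log (1/ε)`. With `u = ε^{2a} t` and `M = 2πK₀/ε²`, these are the stated
constants.
-/

open MeasureTheory Real Set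

noncomputable def simplexKernel (u M c x : ℝ) : ℝ :=
  min (1 / (2 * (c - x)) + 1 / (2 * x + 2 * u)) M

def timeSimplex (T : ℝ) (n : ℕ) : Set (Fin (n + 1) → ℝ) :=
  {σ | StrictMono σ ∧ 0 < σ 0 ∧ σ (Fin.last n) < T}

noncomputable def simplexWeight (u M : ℝ) (n : ℕ) (σ : Fin (n + 1) → ℝ) : ℝ :=
  (2 * σ (Fin.last n) + 2 * u)⁻¹ * ∏ i : Fin n, simplexKernel u M (σ i.succ) (σ i.castSucc)

lemma measurableSet_timeSimplex (T : ℝ) (n : ℕ) : MeasurableSet (timeSimplex T n) := by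
  have h : timeSimplex T n = (⋂ i : Fin n, {σ | σ i.castSucc < σ i.succ})
      ∩ {σ | 0 < σ 0} ∩ {σ | σ (Fin.last n) < T} := by
    ext σ
    simp [timeSimplex, Fin.strictMono_iff_lt_succ, and_assoc]
  rw [h]
  exact .inter (.inter (.iInter fun i => measurableSet_lt (by fun_prop) (by fun_prop))
    (measurableSet_lt (by fun_prop) (by fun_prop))) (measurableSet_lt (by fun_prop) (by fun_prop))

@[fun_prop]
lemma measurable_simplexKernel (u M c : ℝ) : Measurable (simplexKernel u M c) := by
  unfold simplexKernel
  fun_prop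

@[fun_prop]
lemma measurable_simplexWeight (u M : ℝ) (n : ℕ) : Measurable (simplexWeight u M n) := by
  unfold simplexWeight simplexKernel
  fun_prop

lemma simplexKernel_nonneg {u M c x : ℝ} (hu : 0 ≤ u) (hM : 0 ≤ M) (hx : x ∈ Ioo 0 c) :
    0 ≤ simplexKernel u M c x := by
  have : 0 < c - x := sub_pos.2 hx.2
  have : 0 < x := hx.1
  exact le_min (by positivity) hM

lemma simplexWeight_nonneg {u M T : ℝ} (hu : 0 ≤ u) (hM : 0 ≤ M) {n : ℕ} {σ : Fin (n + 1) → ℝ}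
    (hσ : σ ∈ timeSimplex T n) : 0 ≤ simplexWeight u M n σ := by
  obtain ⟨hmono, h0, -⟩ := hσ
  have hpos : ∀ i, 0 < σ i := fun i => h0.trans_le (hmono.monotone (Fin.zero_le i))
  have := hpos (Fin.last n)
  exact mul_nonneg (by positivity) (Finset.prod_nonneg fun i _ =>
    simplexKernel_nonneg hu hM ⟨hpos _, hmono Fin.castSucc_lt_succ⟩)

lemma cons_mem_timeSimplex_iff {T x : ℝ} {n : ℕ} {τ : Fin (n + 1) → ℝ} :
    (Fin.cons x τ : Fin (n + 2) → ℝ) ∈ timeSimplex T (n + 1) ↔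
      τ ∈ timeSimplex T n ∧ x ∈ Ioo 0 (τ 0) := by
  simp only [timeSimplex, mem_ofPred_eq, Fin.strictMono_cons, mem_Ioo, Fin.cons_zero,
    ← Fin.succ_last, Fin.cons_succ]
  constructor
  · rintro ⟨⟨hx, hmono⟩, h0, hT⟩
    exact ⟨⟨hmono, h0.trans (hx 0), hT⟩, h0, hx 0⟩
  · rintro ⟨⟨hmono, -, hT⟩, h0, hx⟩
    exact ⟨⟨fun j => hx.trans_le (hmono.monotone (Fin.zero_le j)), hmono⟩, h0, hT⟩

lemma simplexWeight_cons (u M x : ℝ) {n : ℕ} (τ : Fin (n + 1) → ℝ) :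
    simplexWeight u M (n + 1) (Fin.cons x τ) =
      simplexWeight u M n τ * simplexKernel u M (τ 0) x := by
  simp only [simplexWeight, ← Fin.succ_last, Fin.cons_succ, Fin.prod_univ_succ,
    Fin.castSucc_zero, Fin.cons_zero, ← Fin.succ_castSucc]
  ring

lemma intervalIntegrable_min_of_nonneg {f : ℝ → ℝ} (hf : Measurable f) {a b M : ℝ}
    (hab : a ≤ b) (hf0 : ∀ x ∈ Ioc a b, 0 ≤ f x) (hM : 0 ≤ M) :
    IntervalIntegrable (fun x => min (f x) M) volume a b := by
  rw [intervalIntegrable_iff_integrableOn_Ioc_of_le hab]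
  refine IntegrableOn.of_bound measure_Ioc_lt_top (hf.min measurable_const).aestronglyMeasurable
    M ?_
  filter_upwards [ae_restrict_mem measurableSet_Ioc] with x hx
  rw [Real.norm_of_nonneg (le_min (hf0 x hx) hM)]
  exact min_le_right _ _

lemma setLIntegral_Ioo_ofReal {f : ℝ → ℝ} {a b : ℝ} (hab : a ≤ b)
    (hf : IntervalIntegrable f volume a b) (hf0 : ∀ x ∈ Ioo a b, 0 ≤ f x) :
    ∫⁻ x in Ioo a b, ENNReal.ofReal (f x) = ENNReal.ofReal (∫ x in a..b, f x) := by
  rw [intervalIntegral.integral_of_le hab, integral_Ioc_eq_integral_Ioo,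
    ofReal_integral_eq_lintegral_ofReal (hf.1.mono_set Ioo_subset_Ioc_self)
      (ae_restrict_of_forall_mem measurableSet_Ioo hf0)]

lemma integral_inv_two_mul_add {u T : ℝ} (hu : 0 < u) (hT : 0 ≤ T) :
    ∫ x in 0..T, (2 * x + 2 * u)⁻¹ = 1 / 2 * log ((T + u) / u) := by
  have h : ∀ x : ℝ, (2 * x + 2 * u)⁻¹ = 2⁻¹ * (x + u)⁻¹ := fun x => by
    rw [← mul_inv, mul_add]
  simp_rw [h]
  rw [intervalIntegral.integral_const_mul, intervalIntegral.integral_comp_add_right (·⁻¹),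
    zero_add, integral_inv_of_pos hu (by linarith), one_div]

lemma intervalIntegrable_inv_two_mul_add {u c : ℝ} (hu : 0 < u) (hc : 0 ≤ c) :
    IntervalIntegrable (fun x => (2 * x + 2 * u)⁻¹) volume 0 c := by
  refine ContinuousOn.intervalIntegrable (ContinuousOn.inv₀ (by fun_prop) fun x hx => ?_)
  rw [uIcc_of_le hc] at hx
  have := hx.1
  positivity

lemma integral_min_inv_two_mul_le {M c t : ℝ} (hM : 0 < M) (hc : 0 ≤ c) (hct : c ≤ t)
    (h1 : 1 ≤ 2 * M * t) :
    ∫ x in 0..c, min (2 * x)⁻¹ M ≤ 1 / 2 + 1 / 2 * log (2 * M * t) := by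
  set d := (2 * M)⁻¹
  set c' := max c d
  have hd : 0 < d := by positivity
  have hdc' : d ≤ c' := le_max_right _ _
  have hc't : c' ≤ t := max_le hct ((inv_le_iff_one_le_mul₀' (by positivity)).2 h1)
  have hint : ∀ a b, 0 ≤ a → a ≤ b →
      IntervalIntegrable (fun x => min (2 * x)⁻¹ M) volume a b :=
    fun a b ha hab => intervalIntegrable_min_of_nonneg (by fun_prop) hab
      (fun x hx => by have := ha.trans_lt hx.1; positivity) hM.le
  have hinv : IntervalIntegrable (fun x : ℝ => (2 * x)⁻¹) volume d c' := by
    refine ContinuousOn.intervalIntegrable (ContinuousOn.inv₀ (by fun_prop) fun x hx => ?_)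
    rw [uIcc_of_le hdc'] at hx
    have := hd.trans_le hx.1
    positivity
  calc ∫ x in 0..c, min (2 * x)⁻¹ M
      ≤ ∫ x in 0..c', min (2 * x)⁻¹ M :=
        intervalIntegral.integral_mono_interval le_rfl hc (le_max_left _ _)
          (ae_restrict_of_forall_mem measurableSet_Ioc fun x hx => le_min
            (by have := hx.1; positivity) hM.le) (hint 0 c' le_rfl (hd.le.trans hdc'))
    _ = (∫ x in 0..d, min (2 * x)⁻¹ M) + ∫ x in d..c', min (2 * x)⁻¹ M :=
        (intervalIntegral.integral_add_adjacent_intervals (hint 0 d le_rfl hd.le)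
          (hint d c' hd.le hdc')).symm
    _ ≤ (∫ _ in 0..d, M) + ∫ x in d..c', (2 * x)⁻¹ := by
        gcongr
        · exact intervalIntegral.integral_mono_on hd.le (hint 0 d le_rfl hd.le)
            intervalIntegrable_const fun x _ => min_le_right _ _
        · exact intervalIntegral.integral_mono_on hdc' (hint d c' hd.le hdc') hinv
            fun x _ => min_le_left _ _
    _ = 1 / 2 + 1 / 2 * log (2 * M * c') := by
        simp_rw [mul_inv]
        rw [intervalIntegral.integral_const, intervalIntegral.integral_const_mul,
          integral_inv_of_pos hd (hd.trans_le hdc'), div_eq_mul_inv c', inv_inv, smul_eq_mul]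
        have hdM : d * (2 * M) = 1 := inv_mul_cancel₀ (by positivity)
        field_simp
        linear_combination hdM
    _ ≤ 1 / 2 + 1 / 2 * log (2 * M * t) := by gcongr

lemma intervalIntegrable_simplexKernel {u M c : ℝ} (hu : 0 ≤ u) (hM : 0 ≤ M) (hc : 0 ≤ c) :
    IntervalIntegrable (simplexKernel u M c) volume 0 c :=
  intervalIntegrable_min_of_nonneg (by fun_prop) hc (fun x hx => by
    have : 0 ≤ c - x := sub_nonneg.2 hx.2
    have := hx.1
    positivity) hM

lemma integral_simplexKernel_le {u M c t : ℝ} (hu : 0 < u) (hM : 0 < M) (hc : 0 ≤ c)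
    (hct : c + u ≤ t) (h1 : 1 ≤ 2 * M * t) :
    ∫ x in 0..c, simplexKernel u M c x ≤
      1 / 2 + 1 / 2 * log (2 * M * t) + 1 / 2 * log (t / u) := by
  have hrefl : IntervalIntegrable (fun x => min (2 * (c - x))⁻¹ M) volume 0 c :=
    intervalIntegrable_min_of_nonneg (by fun_prop) hc (fun x hx => by
      have : 0 ≤ c - x := sub_nonneg.2 hx.2
      positivity) hM.le
  have hinv := intervalIntegrable_inv_two_mul_add hu hc
  calc ∫ x in 0..c, simplexKernel u M c x
      ≤ ∫ x in 0..c, (min (2 * (c - x))⁻¹ M + (2 * x + 2 * u)⁻¹) := by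
        refine intervalIntegral.integral_mono_on hc
          (intervalIntegrable_simplexKernel hu.le hM.le hc) (hrefl.add hinv) fun x hx => ?_
        have : 0 ≤ (2 * x + 2 * u)⁻¹ := by have := hx.1; positivity
        rw [simplexKernel, one_div, one_div, ← min_add_add_right]
        exact min_le_min_left _ (le_add_of_nonneg_right this)
    _ = (∫ x in 0..c, min (2 * x)⁻¹ M) + 1 / 2 * log ((c + u) / u) := by
        rw [intervalIntegral.integral_add hrefl hinv, integral_inv_two_mul_add hu hc,
          intervalIntegral.integral_comp_sub_left (fun x => min (2 * x)⁻¹ M), sub_self, sub_zero]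
    _ ≤ 1 / 2 + 1 / 2 * log (2 * M * t) + 1 / 2 * log (t / u) := by
        gcongr
        exact integral_min_inv_two_mul_le hM hc (by linarith) h1

theorem lintegral_pi_fin_succ_eq_lintegral_cons {α : Type*} [MeasurableSpace α] (μ : Measure α)
    [SigmaFinite μ] {n : ℕ} {g : (Fin (n + 1) → α) → ENNReal} (hg : Measurable g) :
    ∫⁻ σ, g σ ∂Measure.pi (fun _ => μ) =
      ∫⁻ τ, ∫⁻ x, g (Fin.cons x τ) ∂μ ∂Measure.pi (fun _ => μ) := by
  set e := (MeasurableEquiv.piFinSuccAbove (fun _ : Fin (n + 1) => α) 0).symm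
  rw [← (measurePreserving_piFinSuccAbove (fun _ => μ) 0).symm.lintegral_comp_emb
      e.measurableEmbedding, lintegral_prod_symm' (fun p => g (e p)) (hg.comp e.measurable)]
  simp [e, MeasurableEquiv.piFinSuccAbove_symm_apply, Fin.insertNthEquiv, Fin.insertNth_zero']

lemma setLIntegral_timeSimplex_succ {T : ℝ} {n : ℕ} {g : (Fin (n + 2) → ℝ) → ENNReal}
    (hg : Measurable g) :
    ∫⁻ σ in timeSimplex T (n + 1), g σ =
      ∫⁻ τ in timeSimplex T n, ∫⁻ x in Ioo 0 (τ 0), g (Fin.cons x τ) := by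
  have hcons : ∀ τ x, (timeSimplex T (n + 1)).indicator g (Fin.cons x τ) =
      (timeSimplex T n).indicator
        (fun τ => (Ioo 0 (τ 0)).indicator (fun x => g (Fin.cons x τ)) x) τ := by
    intro τ x
    by_cases hτ : τ ∈ timeSimplex T n <;> by_cases hx : x ∈ Ioo 0 (τ 0) <;>
      simp [indicator, hτ, hx, cons_mem_timeSimplex_iff]
  have hS := measurableSet_timeSimplex T
  rw [← lintegral_indicator (hS _), ← lintegral_indicator (hS _), volume_pi,
    lintegral_pi_fin_succ_eq_lintegral_cons _ (hg.indicator (hS _))]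
  refine lintegral_congr fun τ => ?_
  simp_rw [hcons]
  by_cases hτ : τ ∈ timeSimplex T n
  · simp [hτ, lintegral_indicator measurableSet_Ioo]
  · simp [hτ]

lemma setLIntegral_simplexWeight_le {u M T : ℝ} (hu : 0 ≤ u) (hM : 0 ≤ M) {B L : ENNReal}
    (hB : ∀ c ∈ Ioo 0 T, ∫⁻ x in Ioo 0 c, ENNReal.ofReal (simplexKernel u M c x) ≤ B)
    (hL : ∫⁻ x in Ioo 0 T, ENNReal.ofReal (2 * x + 2 * u)⁻¹ ≤ L) (n : ℕ) :
    ∫⁻ σ in timeSimplex T n, ENNReal.ofReal (simplexWeight u M n σ) ≤ B ^ n * L := by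
  induction n with
  | zero =>
    have hS : timeSimplex T 0 = MeasurableEquiv.funUnique (Fin 1) ℝ ⁻¹' Ioo 0 T := by
      ext σ
      simpa [timeSimplex, Fin.last] using fun _ _ => Subsingleton.strictMono (α := Fin 1) σ
    rw [pow_zero, one_mul, hS]
    convert (volume_preserving_funUnique (Fin 1) ℝ).setLIntegral_comp_preimage_emb
      (MeasurableEquiv.measurableEmbedding _) (fun x => ENNReal.ofReal (2 * x + 2 * u)⁻¹) _
      |>.trans_le hL
    simp [simplexWeight, Fin.last]
  | succ n ih =>
    rw [setLIntegral_timeSimplex_succ (measurable_simplexWeight u M _).ennreal_ofReal]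
    calc ∫⁻ τ in timeSimplex T n, ∫⁻ x in Ioo 0 (τ 0),
          ENNReal.ofReal (simplexWeight u M (n + 1) (Fin.cons x τ))
        ≤ ∫⁻ τ in timeSimplex T n, B * ENNReal.ofReal (simplexWeight u M n τ) := by
          refine setLIntegral_mono (by fun_prop) fun τ hτ => ?_
          have hτ0 : τ 0 ∈ Ioo 0 T := ⟨hτ.2.1, (hτ.1.monotone (Fin.zero_le _)).trans_lt hτ.2.2⟩
          simp_rw [simplexWeight_cons, ENNReal.ofReal_mul (simplexWeight_nonneg hu hM hτ)]
          rw [lintegral_const_mul _ (by fun_prop), mul_comm]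
          gcongr
          exact hB _ hτ0
      _ = B * ∫⁻ τ in timeSimplex T n, ENNReal.ofReal (simplexWeight u M n τ) :=
          lintegral_const_mul _ (by fun_prop)
      _ ≤ B ^ (n + 1) * L := by
          rw [pow_succ', mul_assoc]
          gcongr

theorem integral_indicator_timeSimplex_le {u M t : ℝ} (hu : 0 < u) (hM : 0 < M) (hut : u ≤ t)
    (h1 : 1 ≤ 2 * M * t) (n : ℕ) :
    ∫ σ, (timeSimplex (t - u) n).indicator (simplexWeight u M n) σ ≤
      (1 / 2 + 1 / 2 * log (2 * M * t) + 1 / 2 * log (t / u)) ^ n * (1 / 2 * log (t / u)) := by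
  have hMt : 0 ≤ log (2 * M * t) := log_nonneg h1
  have htu : 0 ≤ log (t / u) := log_nonneg ((one_le_div hu).2 hut)
  have hB : 0 ≤ 1 / 2 + 1 / 2 * log (2 * M * t) + 1 / 2 * log (t / u) := by positivity
  have hS := measurableSet_timeSimplex (t - u) n
  rw [integral_indicator hS, integral_eq_lintegral_of_nonneg_ae
    (ae_restrict_of_forall_mem hS fun σ hσ => simplexWeight_nonneg hu.le hM.le hσ)
    (measurable_simplexWeight u M n).aestronglyMeasurable]
  refine ENNReal.toReal_le_of_le_ofReal (by positivity) ?_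
  rw [ENNReal.ofReal_mul (by positivity), ENNReal.ofReal_pow hB]
  refine setLIntegral_simplexWeight_le hu.le hM.le (fun c hc => ?_) ?_ n
  · rw [setLIntegral_Ioo_ofReal hc.1.le (intervalIntegrable_simplexKernel hu.le hM.le hc.1.le)
      fun x hx => simplexKernel_nonneg hu.le hM.le hx]
    exact ENNReal.ofReal_le_ofReal
      (integral_simplexKernel_le hu hM hc.1.le (by linarith [hc.2]) h1)
  · rw [setLIntegral_Ioo_ofReal (sub_nonneg.2 hut)
      (intervalIntegrable_inv_two_mul_add hu (sub_nonneg.2 hut))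
      fun x hx => by have := hx.1; positivity, integral_inv_two_mul_add hu (sub_nonneg.2 hut),
      sub_add_cancel]

-- With `n + 1` time variables, the exponent `n` is the paper's `n − 1`.
theorem stmt12_general (t K₀ a ε : ℝ) (ht : 0 < t) (hK : 0 < K₀)
    (ha : 0 < a) (hε0 : 0 < ε) (hε1 : ε < 1)
    (hKt : ε ^ 2 ≤ 4 * π * K₀ * t) (n : ℕ) :
    (∫ σ : Fin (n+1) → ℝ,
      Set.indicator
        {σ : Fin (n+1) → ℝ | StrictMono σ ∧ 0 < σ 0 ∧ σ (Fin.last n) < t - ε ^ (2 * a) * t}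
        (fun σ => (2 * σ (Fin.last n) + 2 * (ε ^ (2 * a) * t))⁻¹ *
          ∏ i : Fin n,
            min (1 / (2 * (σ i.succ - σ i.castSucc)) + 1 / (2 * σ i.castSucc + 2 * (ε ^ (2 * a) * t)))
              (2 * π * K₀ / ε ^ 2)) σ)
    ≤ ((1/2) * Real.log (4 * π * K₀ * t) + 1/2 + (1 + a) * Real.log (1/ε)) ^ n
        * (a * Real.log (1/ε)) := by
  have hεa : ε ^ (2 * a) ≤ 1 := rpow_le_one hε0.le hε1.le (by positivity)
  have h2Mt : 2 * (2 * π * K₀ / ε ^ 2) * t = 4 * π * K₀ * t / ε ^ 2 := by ring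
  have hlog_tu : log (t / (ε ^ (2 * a) * t)) = 2 * a * log (1 / ε) := by
    rw [div_mul_cancel_right₀ ht.ne', log_inv, log_rpow hε0, one_div, log_inv]
    ring
  have hlog_Mt :
      log (2 * (2 * π * K₀ / ε ^ 2) * t) = log (4 * π * K₀ * t) + 2 * log (1 / ε) := by
    rw [h2Mt, log_div (by positivity) (by positivity), log_pow, one_div, log_inv]
    ring
  have key := integral_indicator_timeSimplex_le (u := ε ^ (2 * a) * t) (by positivity)
    (by positivity : 0 < 2 * π * K₀ / ε ^ 2) (mul_le_of_le_one_left ht.le hεa)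
    (by rw [h2Mt]; exact (one_le_div (by positivity)).2 hKt) n
  rw [hlog_tu, hlog_Mt] at key
  exact key.trans_eq (by ring)

/-- The `n`-fold temporal simplex bound in the conditional-variance estimate
(stated with `n+1` variables so that the number of variables is an arbitrary
integer `≥ 1`; accordingly the exponent on the right-hand side is `n`,
the paper's `n − 1`).  Here `u = ε^{2a} t`. -/
theorem stmt12 (t K₀ a ε : ℝ) (ht : 0 < t) (hK : 0 < K₀)
    (ha : 0 < a) (ha1 : a ≤ 1) (hε0 : 0 < ε) (hε1 : ε < 1)
    (hKt : ε ^ 2 ≤ 4 * π * K₀ * t) (n : ℕ) :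
    (∫ σ : Fin (n+1) → ℝ,
      Set.indicator
        {σ : Fin (n+1) → ℝ | StrictMono σ ∧ 0 < σ 0 ∧ σ (Fin.last n) < t - ε ^ (2 * a) * t}
        (fun σ => (2 * σ (Fin.last n) + 2 * (ε ^ (2 * a) * t))⁻¹ *
          ∏ i : Fin n,
            min (1 / (2 * (σ i.succ - σ i.castSucc)) + 1 / (2 * σ i.castSucc + 2 * (ε ^ (2 * a) * t)))
              (2 * π * K₀ / ε ^ 2)) σ)
    ≤ ((1/2) * Real.log (4 * π * K₀ * t) + 1/2 + (1 + a) * Real.log (1/ε)) ^ n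
        * (a * Real.log (1/ε)) :=
  stmt12_general t K₀ a ε ht hK ha hε0 hε1 hKt n
end
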